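/- arXiv:1811.12095 — 3 statements merged into one kernel-verified Lean document; each statement's English description precedes it below -/
import Mathlib

section
/- Let d ≥ 2, a > 0, let γ : ℝ → ℝ^d be a smooth unit-speed curve (‖γ'(s)‖ = 1 for all s), let U ⊂ ℝ^d be open, and let s : U → ℝ be a continuously differentiable function such that for every x ∈ U one has ‖x − γ(s(x))‖ = a and (x − γ(s(x))) · γ'(s(x)) ≠ 0. Then the vector field V : U → ℝ^d defined by V(x) := (x − γ(s(x)))/a satisfies ‖V(x)‖ = 1 and div V(x) = (d−1)/a for every x ∈ U. -/
open MeasureTheory Metric Set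

/-- The divergence of a vector field on `ℝ^d`, i.e. the trace of its Fréchet derivative. -/
noncomputable def divergence {d : ℕ} (V : EuclideanSpace ℝ (Fin d) → EuclideanSpace ℝ (Fin d))
    (x : EuclideanSpace ℝ (Fin d)) : ℝ :=
  LinearMap.trace ℝ _ (fderiv ℝ V x).toLinearMap

/-- A set `S ⊆ ℝ^d` has smooth boundary if near every boundary point it is the sublevel set
of a smooth function with nonvanishing gradient. -/
def HasSmoothBoundary {d : ℕ} (S : Set (EuclideanSpace ℝ (Fin d))) : Prop :=
  ∀ x ∈ frontier S, ∃ U : Set (EuclideanSpace ℝ (Fin d)), IsOpen U ∧ x ∈ U ∧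
    ∃ f : EuclideanSpace ℝ (Fin d) → ℝ, ContDiff ℝ (⊤ : ℕ∞) f ∧
      (∀ y ∈ U, fderiv ℝ f y ≠ 0) ∧ S ∩ U = {y | y ∈ U ∧ f y < 0}

/-- The Cheeger constant of `Ω ⊆ ℝ^d`: the infimum of `H^{d-1}(∂S) / λ(S)` over nonempty
bounded open subsets `S ⊆ Ω` with smooth boundary. -/
noncomputable def cheegerConstant {d : ℕ} (Ω : Set (EuclideanSpace ℝ (Fin d))) : ℝ :=
  sInf { h : ℝ | ∃ S : Set (EuclideanSpace ℝ (Fin d)), S.Nonempty ∧ IsOpen S ∧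
    Bornology.IsBounded S ∧ S ⊆ Ω ∧ HasSmoothBoundary S ∧
    h = (μH[(d : ℝ) - 1] (frontier S)).toReal / (volume S).toReal }

/-!
Write `F y = y - γ (s y)`, so that `V = a⁻¹ • F`. By the chain rule `DF = id - Ds ⊗ γ'(s x)`, whose
trace is `d - Ds (γ'(s x))`. Since `‖F‖ = a` is constant on `U`, differentiating `‖F‖²` gives
`⟪F x, DF h⟫ = 0` for all `h`; taking `h = γ'(s x)` yields `(1 - Ds (γ'(s x))) ⟪F x, γ'(s x)⟫ = 0`,
and the transversality hypothesis forces `Ds (γ'(s x)) = 1`. Hence `div V = (d - 1) / a`.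
-/

open Topology Filter
open scoped RealInnerProductSpace

lemma LinearMap.trace_id_sub_smulRight {R M : Type*} [CommRing R] [AddCommGroup M] [Module R M]
    [Module.Free R M] [Module.Finite R M] (f : M →ₗ[R] R) (v : M) :
    trace R M (LinearMap.id - f.smulRight v) = Module.finrank R M - f v := by
  rw [map_sub, trace_id, trace_smulRight]

section Tube

variable {E : Type*} [NormedAddCommGroup E] [InnerProductSpace ℝ E]

theorem HasFDerivAt.inner_apply_eq_zero_of_norm_eventually_eq {G : Type*} [NormedAddCommGroup G]
    [NormedSpace ℝ G] {F : G → E} {F' : G →L[ℝ] E} {x : G} {a : ℝ} (hF : HasFDerivAt F F' x)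
    (hnorm : ∀ᶠ y in 𝓝 x, ‖F y‖ = a) (h : G) :
    ⟪F x, F' h⟫ = 0 := by
  have hconst : HasFDerivAt (‖F ·‖ ^ 2) (0 : G →L[ℝ] ℝ) x :=
    (hasFDerivAt_const (a ^ 2) x).congr_of_eventuallyEq <| hnorm.mono fun y hy => by simp [hy]
  have h2 := congrArg (· h) (hF.norm_sq.unique hconst)
  simpa using h2

theorem hasFDerivAt_sub_comp {γ : ℝ → E} {s : E → ℝ} {g : E} {φ : E →L[ℝ] ℝ} {x : E}
    (hγ : HasDerivAt γ g (s x)) (hs : HasFDerivAt s φ x) :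
    HasFDerivAt (fun y => y - γ (s y)) (ContinuousLinearMap.id ℝ E - φ.smulRight g) x := by
  refine (hasFDerivAt_id x).sub ?_
  exact (hγ.hasFDerivAt.comp x hs).congr_fderiv (ContinuousLinearMap.ext fun h => by simp)

theorem apply_eq_one_of_norm_sub_comp_eventually_eq {γ : ℝ → E} {s : E → ℝ} {g : E}
    {φ : E →L[ℝ] ℝ} {x : E} {a : ℝ} (hγ : HasDerivAt γ g (s x)) (hs : HasFDerivAt s φ x)
    (hdist : ∀ᶠ y in 𝓝 x, ‖y - γ (s y)‖ = a) (hperp : ⟪x - γ (s x), g⟫ ≠ 0) :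
    φ g = 1 := by
  have h := (hasFDerivAt_sub_comp hγ hs).inner_apply_eq_zero_of_norm_eventually_eq hdist g
  simp only [sub_apply, ContinuousLinearMap.id_apply,
    ContinuousLinearMap.smulRight_apply, inner_sub_right, real_inner_smul_right] at h
  have : (1 - φ g) * ⟪x - γ (s x), g⟫ = 0 := by linarith
  linarith [(mul_eq_zero.mp this).resolve_right hperp]

end Tube

theorem test_vector_field_of_tube_general
    (d : ℕ) (a : ℝ) (ha : 0 < a)
    (γ : ℝ → EuclideanSpace ℝ (Fin d))
    (hsmooth : ContDiff ℝ (⊤ : ℕ∞) γ)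
    (U : Set (EuclideanSpace ℝ (Fin d))) (hU : IsOpen U)
    (s : EuclideanSpace ℝ (Fin d) → ℝ) (hs : ContDiffOn ℝ 1 s U)
    (hdist : ∀ x ∈ U, ‖x - γ (s x)‖ = a)
    (hperp : ∀ x ∈ U, (inner ℝ (x - γ (s x)) (deriv γ (s x)) : ℝ) ≠ 0)
    (V : EuclideanSpace ℝ (Fin d) → EuclideanSpace ℝ (Fin d))
    (hVdef : ∀ x, V x = a⁻¹ • (x - γ (s x))) :
    ∀ x ∈ U, ‖V x‖ = 1 ∧ divergence V x = ((d : ℝ) - 1) / a := by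
  intro x hx
  refine ⟨by rw [hVdef, norm_smul, hdist x hx, norm_inv, Real.norm_of_nonneg ha.le,
    inv_mul_cancel₀ ha.ne'], ?_⟩
  have hγ : HasDerivAt γ (deriv γ (s x)) (s x) :=
    (hsmooth.differentiable (by simp) (s x)).hasDerivAt
  have hsx : HasFDerivAt s (fderiv ℝ s x) x :=
    ((hs.differentiableOn one_ne_zero).differentiableAt (hU.mem_nhds hx)).hasFDerivAt
  have hrate : fderiv ℝ s x (deriv γ (s x)) = 1 :=
    apply_eq_one_of_norm_sub_comp_eventually_eq hγ hsx
      (eventually_of_mem (hU.mem_nhds hx) hdist) (hperp x hx)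
  have hV : HasFDerivAt V (a⁻¹ • (ContinuousLinearMap.id ℝ _ -
      (fderiv ℝ s x).smulRight (deriv γ (s x)))) x := by
    rw [show V = _ from funext hVdef]
    exact (hasFDerivAt_sub_comp hγ hsx).const_smul a⁻¹
  rw [divergence, hV.fderiv, ContinuousLinearMap.toLinearMap_smul, map_smul,
    ContinuousLinearMap.toLinearMap_sub, ContinuousLinearMap.coe_id,
    ContinuousLinearMap.coe_smulRight, LinearMap.trace_id_sub_smulRight,
    ContinuousLinearMap.coe_coe, hrate, finrank_euclideanSpace_fin, smul_eq_mul, div_eq_inv_mul]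

/-- If `s : U → ℝ` is `C¹` on an open set `U ⊆ ℝ^d` with `‖x - γ(s(x))‖ = a` and
`(x - γ(s(x))) · γ'(s(x)) ≠ 0` on `U`, where `γ` is a smooth unit-speed curve, then the
vector field `V(x) = (x - γ(s(x)))/a` satisfies `‖V‖ = 1` and `div V = (d-1)/a` on `U`. -/
theorem test_vector_field_of_tube
    (d : ℕ) (hd : 2 ≤ d) (a : ℝ) (ha : 0 < a)
    (γ : ℝ → EuclideanSpace ℝ (Fin d))
    (hsmooth : ContDiff ℝ (⊤ : ℕ∞) γ)
    (hunit : ∀ t : ℝ, ‖deriv γ t‖ = 1)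
    (U : Set (EuclideanSpace ℝ (Fin d))) (hU : IsOpen U)
    (s : EuclideanSpace ℝ (Fin d) → ℝ) (hs : ContDiffOn ℝ 1 s U)
    (hdist : ∀ x ∈ U, ‖x - γ (s x)‖ = a)
    (hperp : ∀ x ∈ U, (inner ℝ (x - γ (s x)) (deriv γ (s x)) : ℝ) ≠ 0)
    (V : EuclideanSpace ℝ (Fin d) → EuclideanSpace ℝ (Fin d))
    (hVdef : ∀ x, V x = a⁻¹ • (x - γ (s x))) :
    ∀ x ∈ U, ‖V x‖ = 1 ∧ divergence V x = ((d : ℝ) - 1) / a :=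
  test_vector_field_of_tube_general d a ha γ hsmooth U hU s hs hdist hperp V hVdef
end

section
/- Let d ≥ 2 and 0 < r < R. Set C := (R^{d−1} + r^{d−1})/(R^d − r^d) and define f : (0, ∞) → ℝ by f(t) := C − (C·r^d + r^{d−1})·t^{−d}. Then: (i) R·f(R) = 1 and r·f(r) = −1; (ii) the function t ↦ t·f(t) is strictly increasing on (0, ∞); and (iii) t·|f(t)| < 1 for every t ∈ (r, R). -/
open Set

/-- Properties of the radial profile `f(t) = C - (C r^d + r^{d-1}) t^{-d}` with
`C = (R^{d-1} + r^{d-1})/(R^d - r^d)`: boundary values `R f(R) = 1`, `r f(r) = -1`,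
strict monotonicity of `t ↦ t f(t)` on `(0, ∞)`, and `t |f(t)| < 1` on `(r, R)`. -/
theorem radial_profile_properties
    (d : ℕ) (hd : 2 ≤ d) (r R : ℝ) (hr : 0 < r) (hrR : r < R)
    (C : ℝ) (hC : C = (R ^ (d - 1) + r ^ (d - 1)) / (R ^ d - r ^ d))
    (f : ℝ → ℝ) (hf : ∀ t : ℝ, f t = C - (C * r ^ d + r ^ (d - 1)) * t ^ (-(d : ℤ))) :
    (R * f R = 1 ∧ r * f r = -1) ∧
    StrictMonoOn (fun t : ℝ => t * f t) (Set.Ioi (0 : ℝ)) ∧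
    (∀ t ∈ Set.Ioo r R, t * |f t| < 1) := by
  obtain ⟨e, rfl⟩ : ∃ e, d = e + 1 := ⟨d - 1, by omega⟩
  have he : 1 ≤ e := by omega
  simp only [Nat.add_sub_cancel] at hC hf
  have hR : (0 : ℝ) < R := hr.trans hrR
  have hpow : r ^ (e + 1) < R ^ (e + 1) := by
    exact pow_lt_pow_left₀ hrR hr.le (by omega)
  have hden : (0 : ℝ) < R ^ (e + 1) - r ^ (e + 1) := sub_pos.mpr hpow
  have hCpos : 0 < C := by
    rw [hC]
    positivity
  have hA : 0 < C * r ^ (e + 1) + r ^ e := by positivity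
  -- key formula for t f(t)
  have key : ∀ t : ℝ, 0 < t →
      t * f t = C * t - (C * r ^ (e + 1) + r ^ e) * (t ^ e)⁻¹ := by
    intro t ht
    rw [hf, zpow_neg, zpow_natCast, pow_succ]
    have h1 : t ^ e ≠ 0 := by positivity
    field_simp
    ring
  have hgR : R * f R = 1 := by
    rw [key R hR, hC]
    have h1 : R ^ e ≠ 0 := by positivity
    have h2 : R ^ (e + 1) - r ^ (e + 1) ≠ 0 := ne_of_gt hden
    field_simp
    ring
  have hgr : r * f r = -1 := by
    rw [key r hr, hC]
    have h1 : r ^ e ≠ 0 := by positivity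
    have h2 : R ^ (e + 1) - r ^ (e + 1) ≠ 0 := ne_of_gt hden
    field_simp
    ring
  have hmono : StrictMonoOn (fun t : ℝ => t * f t) (Set.Ioi (0 : ℝ)) := by
    intro x hx y hy hxy
    simp only [Set.mem_Ioi] at hx hy
    simp only [key x hx, key y hy]
    have h1 : C * x < C * y := by
      exact mul_lt_mul_of_pos_left hxy hCpos
    have h2 : (y ^ e)⁻¹ < (x ^ e)⁻¹ := by
      apply inv_strictAnti₀ (by positivity)
      exact pow_lt_pow_left₀ hxy hx.le (by omega)
    have h3 : (C * r ^ (e + 1) + r ^ e) * (y ^ e)⁻¹ <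
        (C * r ^ (e + 1) + r ^ e) * (x ^ e)⁻¹ :=
      mul_lt_mul_of_pos_left h2 hA
    linarith
  refine ⟨⟨hgR, hgr⟩, hmono, ?_⟩
  intro t ht
  obtain ⟨ht1, ht2⟩ := ht
  have htpos : 0 < t := hr.trans ht1
  have hl : -1 < t * f t := by
    have := hmono (Set.mem_Ioi.mpr hr) (Set.mem_Ioi.mpr htpos) ht1
    simpa [hgr] using this
  have hu : t * f t < 1 := by
    have := hmono (Set.mem_Ioi.mpr htpos) (Set.mem_Ioi.mpr hR) ht2
    simpa [hgR] using this
  have : |t * f t| < 1 := abs_lt.mpr ⟨hl, hu⟩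
  rwa [abs_mul, abs_of_pos htpos] at this
end

section
/- Let d ≥ 2 and 0 < r < R. Set C := (R^{d−1} + r^{d−1})/(R^d − r^d), define f : (0, ∞) → ℝ by f(t) := C − (C·r^d + r^{d−1})·t^{−d}, and define the vector field V : ℝ^d \ {0} → ℝ^d by V(x) := f(‖x‖)·x. Then V is smooth on ℝ^d \ {0} and its divergence satisfies div V(x) = f'(‖x‖)·‖x‖ + d·f(‖x‖) = d·C for every x ≠ 0; moreover ‖V(x)‖ < 1 for every x with r < ‖x‖ < R, and ‖V(x)‖ = 1 whenever ‖x‖ = r or ‖x‖ = R. -/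
open MeasureTheory Metric Set

/-!
The derivative of a radial field `x ↦ φ ‖x‖ • x` is `φ ‖x‖ • id` plus the rank-one map
`y ↦ φ' ‖x‖ * (D‖·‖ₓ y) • x`, whose trace is `φ' ‖x‖ * ‖x‖` since the derivative of the norm at
`x` sends `x` to `‖x‖`. Hence `div V = f'(‖x‖) ‖x‖ + d f(‖x‖)`, and for `f t = C - K t⁻ᵈ` the
term `K t⁻ᵈ` solves the homogeneous equation `t g' + d g = 0`, leaving `d C`.

Moreover `‖V x‖ = |g ‖x‖|` for `g t = f t * t = C t - K t^(1-d)`, which is strictly increasing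
as `C, K > 0`. The choice `K = C rᵈ + rᵈ⁻¹` makes `g r = -1` and the choice of `C` makes `g R = 1`.
-/

open Module

noncomputable def shellProfile (C K : ℝ) (n : ℕ) (t : ℝ) : ℝ := C - K * t ^ (-(n : ℤ))

section ShellProfile

variable (C K : ℝ) (n : ℕ)

lemma shellProfile_eq (t : ℝ) : shellProfile C K n t = C - K / t ^ n := by
  simp [shellProfile, zpow_neg, div_eq_mul_inv]

lemma hasDerivAt_shellProfile {t : ℝ} (ht : t ≠ 0) :
    HasDerivAt (shellProfile C K n) (n * K * t ^ (-(n : ℤ) - 1)) t :=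
  (((hasDerivAt_zpow (-(n : ℤ)) t (.inl ht)).const_mul K).const_sub C).congr_deriv <| by
    push_cast; ring

lemma contDiffAt_shellProfile {k : WithTop ℕ∞} {t : ℝ} (ht : t ≠ 0) :
    ContDiffAt ℝ k (shellProfile C K n) t := by
  rw [show shellProfile C K n = fun t => C - K / t ^ n from funext (shellProfile_eq C K n)]
  fun_prop (disch := positivity)

lemma deriv_shellProfile_mul_add {t : ℝ} (ht : t ≠ 0) :
    deriv (shellProfile C K n) t * t + n * shellProfile C K n t = n * C := by
  rw [(hasDerivAt_shellProfile C K n ht).deriv, shellProfile, zpow_sub_one₀ ht]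
  field_simp
  ring

variable {n}

lemma shellProfile_mul_self (hn : n ≠ 0) {t : ℝ} (ht : t ≠ 0) :
    shellProfile C K n t * t = C * t - K / t ^ (n - 1) := by
  obtain ⟨m, rfl⟩ := Nat.exists_eq_add_one_of_ne_zero hn
  rw [shellProfile_eq, Nat.add_sub_cancel, pow_succ]
  field_simp

variable {C K}

lemma strictMonoOn_shellProfile_mul_self (hC : 0 < C) (hK : 0 ≤ K) (hn : n ≠ 0) :
    StrictMonoOn (fun t => shellProfile C K n t * t) (Ioi 0) := by
  intro a ha b hb hab
  simp only [shellProfile_mul_self C K hn ha.ne', shellProfile_mul_self C K hn hb.ne']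
  have : K / b ^ (n - 1) ≤ K / a ^ (n - 1) :=
    div_le_div_of_nonneg_left hK (pow_pos ha _) (pow_le_pow_left₀ ha.le hab.le _)
  nlinarith

end ShellProfile

lemma shellProfile_inner_mul_self (C : ℝ) {r : ℝ} (hr : r ≠ 0) {d : ℕ} (hd : d ≠ 0) :
    shellProfile C (C * r ^ d + r ^ (d - 1)) d r * r = -1 := by
  obtain ⟨m, rfl⟩ := Nat.exists_eq_add_one_of_ne_zero hd
  rw [shellProfile_mul_self _ _ hd hr, Nat.add_sub_cancel, pow_succ]
  field_simp
  ring

lemma shellProfile_outer_mul_self {C r R : ℝ} (hR : R ≠ 0) {d : ℕ} (hd : d ≠ 0)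
    (hC : C * (R ^ d - r ^ d) = R ^ (d - 1) + r ^ (d - 1)) :
    shellProfile C (C * r ^ d + r ^ (d - 1)) d R * R = 1 := by
  obtain ⟨m, rfl⟩ := Nat.exists_eq_add_one_of_ne_zero hd
  rw [Nat.add_sub_cancel, pow_succ] at hC
  rw [shellProfile_mul_self _ _ hd hR, Nat.add_sub_cancel, pow_succ]
  field_simp
  linear_combination hC

lemma trace_fderiv_radial {E : Type*} [NormedAddCommGroup E] [NormedSpace ℝ E]
    [FiniteDimensional ℝ E] {φ : ℝ → ℝ} {x : E} (hφ : DifferentiableAt ℝ φ ‖x‖)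
    (hnorm : DifferentiableAt ℝ (‖·‖) x) :
    LinearMap.trace ℝ E (fderiv ℝ (fun y => φ ‖y‖ • y) x) =
      deriv φ ‖x‖ * ‖x‖ + finrank ℝ E * φ ‖x‖ := by
  have hV : HasFDerivAt (fun y => φ ‖y‖ • y) _ x :=
    (hφ.hasDerivAt.comp_hasFDerivAt x hnorm.hasFDerivAt).smul (hasFDerivAt_id x)
  rw [hV.fderiv]
  simp only [Function.comp_apply, ContinuousLinearMap.toLinearMap_add,
    ContinuousLinearMap.toLinearMap_smul, ContinuousLinearMap.coe_id,
    ContinuousLinearMap.coe_smulRight, map_add, map_smul, LinearMap.trace_id, smul_eq_mul,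
    LinearMap.trace_smulRight, LinearMap.smul_apply, ContinuousLinearMap.coe_coe,
    hnorm.fderiv_norm_self]
  ring

/-- The radial test vector field `V(x) = f(‖x‖) x` for the spherical shell: `V` is smooth
away from the origin, has constant divergence
`div V(x) = f'(‖x‖)‖x‖ + d f(‖x‖) = d C`, satisfies `‖V(x)‖ < 1` strictly inside the
shell and `‖V(x)‖ = 1` on its boundary spheres. -/
theorem radial_test_vector_field_of_shell
    (d : ℕ) (hd : 2 ≤ d) (r R : ℝ) (hr : 0 < r) (hrR : r < R)
    (C : ℝ) (hC : C = (R ^ (d - 1) + r ^ (d - 1)) / (R ^ d - r ^ d))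
    (f : ℝ → ℝ) (hf : ∀ t : ℝ, f t = C - (C * r ^ d + r ^ (d - 1)) * t ^ (-(d : ℤ)))
    (V : EuclideanSpace ℝ (Fin d) → EuclideanSpace ℝ (Fin d))
    (hVdef : ∀ x, V x = f ‖x‖ • x) :
    ContDiffOn ℝ (⊤ : ℕ∞) V {x : EuclideanSpace ℝ (Fin d) | x ≠ 0} ∧
    (∀ x : EuclideanSpace ℝ (Fin d), x ≠ 0 →
      divergence V x = deriv f ‖x‖ * ‖x‖ + (d : ℝ) * f ‖x‖ ∧ divergence V x = (d : ℝ) * C) ∧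
    (∀ x : EuclideanSpace ℝ (Fin d), r < ‖x‖ → ‖x‖ < R → ‖V x‖ < 1) ∧
    (∀ x : EuclideanSpace ℝ (Fin d), ‖x‖ = r ∨ ‖x‖ = R → ‖V x‖ = 1) := by
  have hd0 : d ≠ 0 := by omega
  have hR : 0 < R := hr.trans hrR
  have hRr : 0 < R ^ d - r ^ d := sub_pos.2 (pow_lt_pow_left₀ hrR hr.le hd0)
  have hCpos : 0 < C := hC ▸ div_pos (by positivity) hRr
  replace hf : f = shellProfile C (C * r ^ d + r ^ (d - 1)) d := funext hf
  have hV : V = fun x => f ‖x‖ • x := funext hVdef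
  have hnormV (x : EuclideanSpace ℝ (Fin d)) : ‖V x‖ = |f ‖x‖ * ‖x‖| := by
    rw [hVdef, norm_smul, Real.norm_eq_abs, abs_mul, abs_norm]
  have hinner : f r * r = -1 := hf ▸ shellProfile_inner_mul_self C hr.ne' hd0
  have houter : f R * R = 1 := hf ▸ shellProfile_outer_mul_self hR.ne' hd0 (by
    rw [hC, div_mul_cancel₀ _ hRr.ne'])
  have hmono : StrictMonoOn (fun t => f t * t) (Ioi 0) :=
    hf ▸ strictMonoOn_shellProfile_mul_self hCpos (by positivity) hd0
  refine ⟨fun x hx => ?_, fun x hx => ?_, fun x hrx hxR => ?_, fun x hx => ?_⟩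
  · have hfx : ContDiffAt ℝ (⊤ : ℕ∞) f ‖x‖ :=
      hf ▸ contDiffAt_shellProfile _ _ _ (norm_ne_zero_iff.2 hx)
    exact hV ▸ ((hfx.comp x (contDiffAt_norm ℝ hx)).smul contDiffAt_id).contDiffWithinAt
  · have hfx : DifferentiableAt ℝ f ‖x‖ :=
      hf ▸ (hasDerivAt_shellProfile _ _ _ (norm_ne_zero_iff.2 hx)).differentiableAt
    have hnorm : DifferentiableAt ℝ (‖·‖) x :=
      (contDiffAt_norm ℝ hx (n := 1)).differentiableAt one_ne_zero
    have hdiv : divergence V x = deriv f ‖x‖ * ‖x‖ + d * f ‖x‖ := by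
      rw [divergence, hV, trace_fderiv_radial hfx hnorm, finrank_euclideanSpace_fin]
    exact ⟨hdiv, hdiv.trans (hf ▸ deriv_shellProfile_mul_add _ _ _ (norm_ne_zero_iff.2 hx))⟩
  · have hx0 : 0 < ‖x‖ := hr.trans hrx
    rw [hnormV, abs_lt]
    constructor
    · linarith [hmono hr hx0 hrx]
    · linarith [hmono hx0 hR hxR]
  · rcases hx with h | h <;> simp [hnormV, h, hinner, houter]
end
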